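/- Let 2^e ∥ 3^n − 1 and let β ∈ F_{3^n} be an element of the θ-graph at level k ≥ 1 above a θ-periodic root (i.e., θ^k(β) is θ-periodic but θ^{k−1}(β) is not, with θ^j(β) ∈ F_{3^n} \ {1,−1} for j < k). Then 2^k is the exact power of 2 dividing ord(ψ(β)), and in particular k ≤ e. -/

import Mathlib

open OnePoint

variable (F : Type*) [Field F] [DecidableEq F]

/-- The map `θ(x) = x + x⁻¹`, with `θ(0) = θ(∞) = ∞`. -/
def theta : OnePoint F → OnePoint F
  | Option.some x => if x = 0 then ∞ else Option.some (x + x⁻¹)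
  | Option.none => ∞

/-- The inverse-square map `s(x) = x⁻²`, with `s(0) = ∞`, `s(∞) = 0`. -/
def sMap : OnePoint F → OnePoint F
  | Option.some x => if x = 0 then ∞ else Option.some (x⁻¹ ^ 2)
  | Option.none => Option.some 0

/-- The involution `ψ(x) = (x+1)/(x-1)`, with `ψ(1) = ∞`, `ψ(∞) = 1`. -/
def psi : OnePoint F → OnePoint F
  | Option.some x => if x = 1 then ∞ else Option.some ((x + 1) / (x - 1))
  | Option.none => Option.some 1

/-!
In characteristic 3 the Cayley map `ψ` conjugates `θ` to `s(y) = y⁻²`, because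
`x + x⁻¹ ∓ 1 = (x ± 1)² / x` there. Hence `ψ(θʲ β) = b ^ (-2)ʲ` with `b = ψ β ∈ F*`,
and `θʲ β` is periodic exactly when `b ^ (-2)ʲ` is periodic under `y ↦ y⁻²`, i.e. has odd
order, i.e. when `2ʲ⁺¹ ∤ ord b`. Being at level `k` therefore pins the 2-adic valuation
of `ord b` to `k`, and `ord b ∣ 3ⁿ - 1` gives `k ≤ e`.
-/

open Function

theorem Nat.two_pow_succ_dvd_iff_even_div_gcd (d j : ℕ) :
    2 ^ (j + 1) ∣ d ↔ Even (d / d.gcd (2 ^ j)) := by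
  rw [even_iff_two_dvd]
  constructor
  · intro h
    have hj : 2 ^ j ∣ d := (pow_dvd_pow 2 j.le_succ).trans h
    rwa [Nat.gcd_eq_right hj, Nat.dvd_div_iff_mul_dvd hj, ← pow_succ]
  · intro h
    have hg : 0 < d.gcd (2 ^ j) := Nat.gcd_pos_of_pos_right d (by positivity)
    -- `2 ^ j / g` is coprime to the even number `d / g`, hence an odd divisor of `2 ^ j`
    have hcop : Nat.Coprime (2 ^ j / d.gcd (2 ^ j)) (2 ^ j) :=
      (((Nat.coprime_div_gcd_div_gcd hg).coprime_dvd_left h).symm.pow_right j)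
    have hgj : d.gcd (2 ^ j) = 2 ^ j :=
      Nat.eq_of_dvd_of_div_eq_one (Nat.gcd_dvd_right d _)
        (hcop.eq_one_of_dvd (Nat.div_dvd_of_dvd (Nat.gcd_dvd_right d _)))
    rw [hgj, Nat.dvd_div_iff_mul_dvd (hgj ▸ Nat.gcd_dvd_left d _), ← pow_succ] at h
    exact h

theorem Function.Semiconj.mem_periodicPts_iff {α β : Type*} {fa : α → α} {fb : β → β}
    {g : α → β} (h : Semiconj g fa fb) (hg : Injective g) {x : α} :
    g x ∈ periodicPts fb ↔ x ∈ periodicPts fa := by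
  refine ⟨fun ⟨n, hn, hx⟩ => ⟨n, hn, hg ?_⟩, fun hx => h.mapsTo_periodicPts hx⟩
  rw [(h.iterate_right n).eq]
  exact hx

section NegTwoPow

variable {G : Type*} [Group G]

theorem mem_periodicPts_zpow_neg_two_iff (x : G) :
    x ∈ periodicPts (· ^ (-2 : ℤ)) ↔ Odd (orderOf x) := by
  simp only [mem_periodicPts, IsPeriodicPt, IsFixedPt, zpow_iterate]
  constructor
  · rintro ⟨m, hm, hx⟩
    have hdvd : (orderOf x : ℤ) ∣ (-2) ^ m - 1 := by
      rw [orderOf_dvd_iff_zpow_eq_one, zpow_sub_one, hx, mul_inv_cancel]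
    have hodd : Odd ((-2 : ℤ) ^ m - 1) :=
      (even_neg_two.pow_of_ne_zero hm.ne').sub_odd odd_one
    exact (Int.natAbs_odd.mpr hodd).of_dvd_nat (Int.natCast_dvd.mp hdvd)
  · intro hodd
    have h4 : 4 ^ (orderOf x).totient ≡ 1 [MOD orderOf x] :=
      Nat.ModEq.pow_totient ((Nat.coprime_two_left.mpr hodd).pow_left 2)
    refine ⟨2 * (orderOf x).totient, ?_, ?_⟩
    · have := Nat.totient_pos.mpr hodd.pos
      omega
    · rw [pow_mul, neg_sq]
      norm_cast
      exact (pow_eq_pow_iff_modEq.mpr h4).trans (pow_one x)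

theorem orderOf_zpow_neg_two_pow (x : G) (j : ℕ) :
    orderOf (x ^ ((-2 : ℤ) ^ j)) = orderOf (x ^ 2 ^ j) := by
  rw [neg_pow, mul_comm, zpow_mul]
  rcases neg_one_pow_eq_or ℤ j with h | h <;> rw [h] <;> norm_cast <;> simp

theorem zpow_neg_two_iterate_mem_periodicPts_iff (x : G) (j : ℕ) :
    (· ^ (-2 : ℤ))^[j] x ∈ periodicPts (· ^ (-2 : ℤ)) ↔ ¬ 2 ^ (j + 1) ∣ orderOf x := by
  rw [zpow_iterate, mem_periodicPts_zpow_neg_two_iff, orderOf_zpow_neg_two_pow,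
    orderOf_pow' x (by positivity), Nat.two_pow_succ_dvd_iff_even_div_gcd, Nat.not_even_iff_odd]

end NegTwoPow

section CharThree

variable {K : Type*} [Field K] [CharP K 3]

theorem CharP.three_eq_zero : (3 : K) = 0 := by
  exact_mod_cast CharP.cast_eq_zero K 3

theorem CharP.two_ne_zero_of_three : (2 : K) ≠ 0 := fun h =>
  one_ne_zero (α := K) (by linear_combination CharP.three_eq_zero (K := K) - h)

-- In characteristic 3, `x² - x + 1 = (x + 1)²` and `x² + x + 1 = (x - 1)²`.
theorem add_inv_sub_one_eq_of_charP_three {x : K} (hx : x ≠ 0) :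
    x + x⁻¹ - 1 = (x + 1) ^ 2 / x := by
  field_simp
  linear_combination (-x) * CharP.three_eq_zero (K := K)

theorem add_inv_add_one_eq_of_charP_three {x : K} (hx : x ≠ 0) :
    x + x⁻¹ + 1 = (x - 1) ^ 2 / x := by
  field_simp
  linear_combination x * CharP.three_eq_zero (K := K)

end CharThree

section ThetaPsi

variable {F}

@[simp] theorem theta_infty : theta F ∞ = ∞ := rfl

@[simp] theorem theta_zero : theta F (0 : F) = ∞ := if_pos rfl

theorem theta_coe_of_ne_zero {x : F} (hx : x ≠ 0) : theta F x = ↑(x + x⁻¹) := if_neg hx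

@[simp] theorem sMap_infty : sMap F ∞ = (0 : F) := rfl

@[simp] theorem sMap_zero : sMap F (0 : F) = ∞ := if_pos rfl

theorem sMap_coe_of_ne_zero {x : F} (hx : x ≠ 0) : sMap F x = ↑(x⁻¹ ^ 2) := if_neg hx

@[simp] theorem psi_infty : psi F ∞ = (1 : F) := rfl

@[simp] theorem psi_one : psi F (1 : F) = ∞ := if_pos rfl

theorem psi_coe_of_ne_one {x : F} (hx : x ≠ 1) : psi F x = ↑((x + 1) / (x - 1)) := if_neg hx

theorem psi_involutive (h2 : (2 : F) ≠ 0) : Involutive (psi F) := by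
  intro x
  cases x with
  | infty => simp
  | coe x =>
    by_cases hx : x = 1
    · simp [hx]
    have hx' : x - 1 ≠ 0 := sub_ne_zero.mpr hx
    have hne : (x + 1) / (x - 1) ≠ 1 := by
      rw [Ne, div_eq_one_iff_eq hx']
      exact fun h => h2 (by linear_combination h)
    rw [psi_coe_of_ne_one hx, psi_coe_of_ne_one hne]
    congr 1
    rw [div_add_one hx', div_sub_one hx', div_div_div_cancel_right₀ hx',
      show x + 1 + (x - 1) = 2 * x by ring, show x + 1 - (x - 1) = 2 by ring,
      mul_div_cancel_left₀ x h2]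

theorem sMap_coe_units (u : Fˣ) : sMap F ((u : F) : OnePoint F) = ((u ^ (-2 : ℤ) : Fˣ) : F) := by
  rw [sMap_coe_of_ne_zero u.ne_zero]
  simp

theorem psi_semiconj_theta_sMap [CharP F 3] : Semiconj (psi F) (theta F) (sMap F) := by
  have h3 : (3 : F) = 0 := CharP.three_eq_zero
  have h2 : (2 : F) ≠ 0 := CharP.two_ne_zero_of_three
  intro x
  cases x with
  | infty => simp [sMap_coe_of_ne_zero]
  | coe x =>
    by_cases hx0 : x = 0
    · subst hx0
      rw [theta_zero, psi_coe_of_ne_one zero_ne_one, sMap_coe_of_ne_zero (by simp)]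
      simp
    by_cases hx1 : x = 1
    · subst hx1
      have h21 : (2 : F) ≠ 1 := fun h => one_ne_zero (α := F) (by linear_combination h)
      rw [theta_coe_of_ne_zero one_ne_zero, psi_one, inv_one, one_add_one_eq_two,
        psi_coe_of_ne_one h21, sMap_infty, two_add_one_eq_three, h3, zero_div]
    by_cases hxm1 : x = -1
    · subst hxm1
      have hθ : (-1 : F) + (-1)⁻¹ = 1 := by
        rw [inv_neg, inv_one]
        linear_combination -h3
      have hm1 : (-1 : F) ≠ 1 := fun h => h2 (by linear_combination -h)
      rw [theta_coe_of_ne_zero (neg_ne_zero.mpr one_ne_zero), hθ, psi_one,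
        psi_coe_of_ne_one hm1]
      simp
    have hx1' : x - 1 ≠ 0 := sub_ne_zero.mpr hx1
    have hxm1' : x + 1 ≠ 0 := fun h => hxm1 (eq_neg_of_add_eq_zero_left h)
    have hθ1 : x + x⁻¹ ≠ 1 := by
      rw [Ne, ← sub_eq_zero, add_inv_sub_one_eq_of_charP_three hx0]
      exact div_ne_zero (pow_ne_zero 2 hxm1') hx0
    rw [theta_coe_of_ne_zero hx0, psi_coe_of_ne_one hθ1, psi_coe_of_ne_one hx1,
      sMap_coe_of_ne_zero (div_ne_zero hxm1' hx1'), add_inv_add_one_eq_of_charP_three hx0,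
      add_inv_sub_one_eq_of_charP_three hx0]
    congr 1
    field_simp

theorem theta_iterate_mem_periodicPts_iff [CharP F 3] {β b : F} (hβ : psi F β = b) (hb : b ≠ 0)
    (j : ℕ) : (theta F)^[j] β ∈ periodicPts (theta F) ↔ ¬ 2 ^ (j + 1) ∣ orderOf b := by
  have hψ : Semiconj (psi F) (theta F) (sMap F) := psi_semiconj_theta_sMap
  have hunits : Semiconj (fun v : Fˣ => ((v : F) : OnePoint F)) (· ^ (-2 : ℤ)) (sMap F) :=
    fun v => (sMap_coe_units v).symm
  have hunits_inj : Injective (fun v : Fˣ => ((v : F) : OnePoint F)) :=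
    OnePoint.coe_injective.comp Units.val_injective
  have horbit : psi F ((theta F)^[j] β) =
      (((· ^ (-2 : ℤ))^[j] (Units.mk0 b hb) : Fˣ) : F) := by
    rw [(hψ.iterate_right j).eq, hβ]
    exact (hunits.iterate_right j (Units.mk0 b hb)).symm
  rw [← hψ.mem_periodicPts_iff (psi_involutive CharP.two_ne_zero_of_three).injective, horbit,
    hunits.mem_periodicPts_iff hunits_inj, zpow_neg_two_iterate_mem_periodicPts_iff,
    ← orderOf_units, Units.val_mk0]

end ThetaPsi

theorem level_k_order [Fintype F] (n : ℕ)
    (hF : Fintype.card F = 3 ^ n) (e : ℕ)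
    (he : 2 ^ e ∣ 3 ^ n - 1 ∧ ¬ 2 ^ (e + 1) ∣ 3 ^ n - 1)
    (β : F) (k : ℕ) (hk : 1 ≤ k)
    (hper : ∃ m : ℕ, 0 < m ∧
      (theta F)^[m] ((theta F)^[k] (β : OnePoint F)) = (theta F)^[k] (β : OnePoint F))
    (hnper : ¬ ∃ m : ℕ, 0 < m ∧
      (theta F)^[m] ((theta F)^[k - 1] (β : OnePoint F)) =
        (theta F)^[k - 1] (β : OnePoint F))
    (hfield : ∀ j : ℕ, j < k → ∃ c : F, (theta F)^[j] (β : OnePoint F) = (c : OnePoint F) ∧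
      c ≠ 1 ∧ c ≠ -1) :
    (∃ b : F, psi F (β : OnePoint F) = (b : OnePoint F) ∧
      2 ^ k ∣ orderOf b ∧ ¬ 2 ^ (k + 1) ∣ orderOf b) ∧ k ≤ e := by
  have : CharP F 3 := charP_of_card_eq_prime_pow hF
  obtain ⟨c, hc, hc1, hcm1⟩ := hfield 0 hk
  obtain rfl : β = c := OnePoint.coe_injective hc
  set b := (β + 1) / (β - 1)
  have hb : b ≠ 0 :=
    div_ne_zero (fun h => hcm1 (eq_neg_of_add_eq_zero_left h)) (sub_ne_zero.mpr hc1)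
  have hlevel := theta_iterate_mem_periodicPts_iff (psi_coe_of_ne_one hc1) hb
  have hodd : ¬ 2 ^ (k + 1) ∣ orderOf b := (hlevel k).mp hper
  have heven : 2 ^ k ∣ orderOf b := by
    simpa [Nat.sub_add_cancel hk] using mt (hlevel (k - 1)).mpr hnper
  have hcard : orderOf b ∣ 3 ^ n - 1 :=
    hF ▸ orderOf_dvd_of_pow_eq_one (FiniteField.pow_card_sub_one_eq_one b hb)
  exact ⟨⟨b, psi_coe_of_ne_one hc1, heven, hodd⟩,
    le_of_not_gt fun hek => he.2 ((pow_dvd_pow 2 hek).trans (heven.trans hcard))⟩
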